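/- arXiv:1707.01959 — 7 statements merged into one kernel-verified Lean document; each statement's English description precedes it below -/
import Mathlib

section
/- Let K = (O, P) be a ground normal hybrid MKNF knowledge base and (T, F) a partial partition of KA(K). If X₁ and X₂ are unfounded sets of K with respect to (T, F), then X₁ ∪ X₂ is an unfounded set of K with respect to (T, F). -/
universe u

/-- A ground normal MKNF rule `K head ← K b (b ∈ bodyP), not c (c ∈ bodyN)`.
`bodyN` also represents `K(body⁻(r))`. -/
structure MRule (α : Type u) where
  head : α
  bodyP : Set α
  bodyN : Set α
  finP : bodyP.Finite
  finN : bodyN.Finite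

/-- A ground normal hybrid MKNF knowledge base.  The ontology `O` is identified with
the class of (Herbrand) first-order interpretations satisfying `π(O)` (under the
standard name assumption a first-order interpretation is identified with the set of
ground atoms it makes true). -/
structure MKB (α : Type u) where
  O : Set (Set α)
  P : Set (MRule α)
  finP : P.Finite

namespace MKB

variable {α : Type u}

/-- The set `KA(K)` of K-atoms of `K` (a K-atom `K a` is identified with the atom `a`). -/
def KA (K : MKB α) : Set α :=
  {a | ∃ r ∈ K.P, a = r.head ∨ a ∈ r.bodyP ∨ a ∈ r.bodyN}

/-- The (Herbrand) models of the objective knowledge `OB_{O,S}`. -/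
def OBmod (K : MKB α) (S : Set α) : Set (Set α) :=
  {I | I ∈ K.O ∧ S ⊆ I}

/-- First-order entailment `OB_{O,S} ⊨ a`. -/
def entails (K : MKB α) (S : Set α) (a : α) : Prop :=
  ∀ I ∈ K.OBmod S, a ∈ I

/-- `OB_{O,S}` is consistent. -/
def consistent (K : MKB α) (S : Set α) : Prop :=
  ∃ I, I ∈ K.OBmod S

/-- `head(R)` for a set of rules `R`. -/
def heads (R : Set (MRule α)) : Set α := {a | ∃ r ∈ R, r.head = a}

/-- `X` is an unfounded set of `K` with respect to the partial partition `(T, F)`. -/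
def Unfounded (K : MKB α) (T F X : Set α) : Prop :=
  X ⊆ K.KA ∧
  ∀ a ∈ X, ∀ R ⊆ K.P,
    K.entails (heads R ∪ T) a →
    (∀ b ∈ F, ∃ I ∈ K.OBmod (heads R ∪ T), b ∉ I) →
    (F = ∅ → K.consistent (heads R ∪ T)) →
    ∃ r ∈ R, (r.bodyP ∩ F).Nonempty ∨ (r.bodyN ∩ T).Nonempty ∨ (r.bodyP ∩ X).Nonempty

/-- The greatest unfounded set `U_K(T, F)`: the union of all unfounded sets. -/
def UK (K : MKB α) (T F : Set α) : Set α := ⋃₀ {X | K.Unfounded T F X}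

/-- Knaster–Tarski least fixpoint of an operator on sets. -/
def lfpSet (f : Set α → Set α) : Set α := sInf {X | f X ⊆ X}

/-- Knaster–Tarski least fixpoint of an operator on pairs of sets. -/
def lfpPair (f : Set α × Set α → Set α × Set α) : Set α × Set α := sInf {p | f p ≤ p}

/-- The operator `V_K^{(T,F)}`. -/
def VK (K : MKB α) (T F X : Set α) : Set α :=
  {a | a ∈ K.KA ∧ K.entails X a} ∪
  {a | ∃ r ∈ K.P, r.head = a ∧ r.bodyP ⊆ X ∧ r.bodyP ∩ F = ∅ ∧ r.bodyN ∩ T = ∅ ∧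
        ∀ b ∈ F, ∃ I ∈ K.OBmod (insert a T), b ∉ I}

/-- `atmost_K(T, F)`: the least fixpoint of `V_K^{(T,F)}`. -/
def atmost (K : MKB α) (T F : Set α) : Set α := lfpSet (K.VK T F)

/-- `T_K^{(T,F)}(X, Y)`. -/
def TKop (K : MKB α) (T F X Y : Set α) : Set α :=
  {a | ∃ r ∈ K.P, r.head = a ∧ r.bodyP ⊆ T ∪ X ∧ r.bodyN ⊆ F ∪ Y} ∪
  {a | a ∈ K.KA ∧ K.entails (T ∪ X) a}

/-- The instance well-founded operator `W_K^{(T,F)}(X, Y) = (T_K^{(T,F)}(X,Y), U_K^{(T,F)}(X,Y))`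
where `U_K^{(T,F)}(X, Y) = U_K(T ∪ X, F ∪ Y)`. -/
def WKop (K : MKB α) (T F : Set α) (p : Set α × Set α) : Set α × Set α :=
  (K.TKop T F p.1 p.2, K.UK (T ∪ p.1) (F ∪ p.2))

/-- `W_K(T, F)`: the least fixpoint of `W_K^{(T,F)}` (obtained by iterating from `(∅, ∅)`). -/
def WKfix (K : MKB α) (T F : Set α) : Set α × Set α := lfpPair (K.WKop T F)

/-- Literals derivable by (the loop of) the unit-propagation procedure `UP_K^{(T,F)}` from
`(X, Y)`: `Deriv K T F X Y true a` means the K-atom `K a` gets assigned true,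
`Deriv K T F X Y false a` that it gets assigned false. -/
inductive Deriv (K : MKB α) (T F X Y : Set α) : Bool → α → Prop where
  | ent (a : α) : a ∈ K.KA → K.entails (T ∪ X) a → Deriv K T F X Y true a
  | pos (r : MRule α) (a : α) : r ∈ K.P → (a = r.head ∨ a ∈ r.bodyN) →
      (∀ b, (b = r.head ∨ b ∈ r.bodyN) → b ≠ a → b ∉ F ∪ Y → Deriv K T F X Y false b) →
      (∀ c ∈ r.bodyP, c ∉ T ∪ X → Deriv K T F X Y true c) →
      Deriv K T F X Y true a
  | neg (r : MRule α) (a : α) : r ∈ K.P → a ∈ r.bodyP →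
      (∀ b, (b = r.head ∨ b ∈ r.bodyN) → b ∉ F ∪ Y → Deriv K T F X Y false b) →
      (∀ c ∈ r.bodyP, c ≠ a → c ∉ T ∪ X → Deriv K T F X Y true c) →
      Deriv K T F X Y false a

/-- Some rule of `P` gets all of its literals falsified during unit propagation,
i.e. `(({head(r)} ∪ K(body⁻(r))) \ (F ∪ Y)) ∪ (body⁺(r) \ (T ∪ X)) = ∅` upon termination. -/
def UPconflict (K : MKB α) (T F X Y : Set α) : Prop :=
  ∃ r ∈ K.P, (∀ b, (b = r.head ∨ b ∈ r.bodyN) → b ∈ F ∪ Y ∨ Deriv K T F X Y false b) ∧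
             (∀ c ∈ r.bodyP, c ∈ T ∪ X ∨ Deriv K T F X Y true c)

/-- The unit-propagation operator `UP_K^{(T,F)}(X, Y)`. -/
noncomputable def UPop (K : MKB α) (T F : Set α) (p : Set α × Set α) : Set α × Set α :=
  letI := Classical.propDecidable
  if UPconflict K T F p.1 p.2 then (K.KA, K.KA)
  else (p.1 ∪ {a | Deriv K T F p.1 p.2 true a}, p.2 ∪ {a | Deriv K T F p.1 p.2 false a})

/-- The expanding well-founded operator `E_K^{(T,F)}(X, Y) = UP_K^{(T,F)}(X,Y) ⊔ (∅, U_K^{(T,F)}(X,Y))`. -/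
noncomputable def EKop (K : MKB α) (T F : Set α) (p : Set α × Set α) : Set α × Set α :=
  K.UPop T F p ⊔ (∅, K.UK (T ∪ p.1) (F ∪ p.2))

/-- `E_K(T, F)`: the least fixpoint of `E_K^{(T,F)}` (obtained by iterating from `(∅, ∅)`). -/
noncomputable def EKfix (K : MKB α) (T F : Set α) : Set α × Set α := lfpPair (K.EKop T F)

/-- The operator `T*_{K,S}`. -/
def Tstar (K : MKB α) (S X : Set α) : Set α :=
  {a | ∃ r ∈ K.P, r.head = a ∧ r.bodyP ⊆ X ∧ r.bodyN ∩ S = ∅} ∪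
  {a | a ∈ K.KA ∧ K.entails X a}

/-- The operator `T*'_{K,S}`. -/
def Tstar' (K : MKB α) (S X : Set α) : Set α :=
  {a | ∃ r ∈ K.P, r.head = a ∧ r.bodyP ⊆ X ∧ r.bodyN ∩ S = ∅ ∧ K.consistent (insert a S)} ∪
  {a | a ∈ K.KA ∧ K.entails X a}

/-- `Γ_K(S)`: least fixpoint of `T*_{K,S}`. -/
def Gamma (K : MKB α) (S : Set α) : Set α := lfpSet (K.Tstar S)

/-- `Γ'_K(S)`: least fixpoint of `T*'_{K,S}`. -/
def Gamma' (K : MKB α) (S : Set α) : Set α := lfpSet (K.Tstar' S)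

/-- The alternating fixpoint sequences `(P_n^{(T,F)}, N_n^{(T,F)})` started from
`P₀ = T` and `N₀ = KA(K) \ F`. -/
def altSeq (K : MKB α) (T F : Set α) : ℕ → Set α × Set α
  | 0 => (T, K.KA \ F)
  | n + 1 => (K.Gamma (K.altSeq T F n).2, K.Gamma' (K.altSeq T F n).1)

/-- Satisfaction of the body of a rule `r` by the MKNF structure `(I, M, N)`
(it does not depend on `I`). -/
def bodySat (M N : Set (Set α)) (r : MRule α) : Prop :=
  (∀ b ∈ r.bodyP, ∀ J ∈ M, b ∈ J) ∧ (∀ c ∈ r.bodyN, ∃ J ∈ N, c ∉ J)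

/-- `(I, M, N) ⊨ π(K)` (it does not depend on `I`). -/
def structSat (K : MKB α) (M N : Set (Set α)) : Prop :=
  (∀ J ∈ M, J ∈ K.O) ∧ ∀ r ∈ K.P, bodySat M N r → ∀ J ∈ M, r.head ∈ J

/-- `M` is an MKNF model of `K`. -/
def IsMKNFModel (K : MKB α) (M : Set (Set α)) : Prop :=
  M.Nonempty ∧ K.structSat M M ∧ ∀ M', M ⊂ M' → ¬ K.structSat M' M

end MKB


open MKB in
/-- the union of two unfounded sets of `K` w.r.t. a partial partition
`(T, F)` of `KA(K)` is an unfounded set of `K` w.r.t. `(T, F)`. -/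
theorem union_of_unfounded_sets_is_unfounded {α : Type u} (K : MKB α)
    (T F : Set α) (hT : T ⊆ K.KA) (hF : F ⊆ K.KA) (hTF : T ∩ F = ∅)
    (X₁ X₂ : Set α)
    (h₁ : K.Unfounded T F X₁) (h₂ : K.Unfounded T F X₂) :
    K.Unfounded T F (X₁ ∪ X₂) := by
  obtain ⟨hs₁, hu₁⟩ := h₁
  obtain ⟨hs₂, hu₂⟩ := h₂
  refine ⟨Set.union_subset hs₁ hs₂, ?_⟩
  intro a ha R hR hent hcons hcons'
  rcases ha with ha | ha
  · obtain ⟨r, hrR, h⟩ := hu₁ a ha R hR hent hcons hcons'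
    refine ⟨r, hrR, ?_⟩
    rcases h with h | h | ⟨x, hx, hxX⟩
    · exact Or.inl h
    · exact Or.inr (Or.inl h)
    · exact Or.inr (Or.inr ⟨x, hx, Or.inl hxX⟩)
  · obtain ⟨r, hrR, h⟩ := hu₂ a ha R hR hent hcons hcons'
    refine ⟨r, hrR, ?_⟩
    rcases h with h | h | ⟨x, hx, hxX⟩
    · exact Or.inl h
    · exact Or.inr (Or.inl h)
    · exact Or.inr (Or.inr ⟨x, hx, Or.inr hxX⟩)
end

section
/- Let K = (O, P) be a ground normal hybrid MKNF knowledge base, (T, F) a partial partition of KA(K), and U an unfounded set of K with respect to (T, F). For any MKNF model M of K such that M ⊨_MKNF ⋀_{K a ∈ T} K a ∧ ⋀_{K b ∈ F} ¬ K b, it holds that M ⊨_MKNF ¬ K u for each K u ∈ U. -/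
universe u

open MKB in
/-- if `U` is an unfounded set of `K` w.r.t. a partial partition `(T, F)` and
`M` is an MKNF model of `K` with `M ⊨ ⋀_{K a ∈ T} K a ∧ ⋀_{K b ∈ F} ¬ K b`, then
`M ⊨ ¬ K u` for each `K u ∈ U`. -/
theorem unfounded_atoms_false_in_models {α : Type u} (K : MKB α)
    (T F : Set α) (hT : T ⊆ K.KA) (hF : F ⊆ K.KA) (hTF : T ∩ F = ∅)
    (U : Set α) (hU : K.Unfounded T F U)
    (M : Set (Set α)) (hM : K.IsMKNFModel M)
    (hsatT : ∀ a ∈ T, ∀ J ∈ M, a ∈ J)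
    (hsatF : ∀ b ∈ F, ∃ J ∈ M, b ∉ J) :
    ∀ u ∈ U, ∃ J ∈ M, u ∉ J := by
  obtain ⟨hne, ⟨hO, hrules⟩, hmin⟩ := hM
  obtain ⟨J₀, hJ₀⟩ := hne
  -- the set of rules whose bodies are satisfied in (M, M) and whose positive
  -- bodies avoid U
  set R : Set (MRule α) :=
    {r | r ∈ K.P ∧ bodySat M M r ∧ r.bodyP ∩ U = ∅} with hR
  have hRP : R ⊆ K.P := fun r hr => hr.1
  -- M is contained in the models of OB_{O, heads R ∪ T}
  have hMsub : M ⊆ K.OBmod (heads R ∪ T) := by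
    intro J hJ
    refine ⟨hO J hJ, ?_⟩
    rintro a (⟨r, hrR, rfl⟩ | haT)
    · exact hrules r hrR.1 hrR.2.1 J hJ
    · exact hsatT a haT J hJ
  -- the F-condition and consistency side conditions hold
  have hFcond : ∀ b ∈ F, ∃ I ∈ K.OBmod (heads R ∪ T), b ∉ I := by
    intro b hb
    obtain ⟨J, hJ, hbJ⟩ := hsatF b hb
    exact ⟨J, hMsub hJ, hbJ⟩
  have hcons : F = ∅ → K.consistent (heads R ∪ T) := fun _ => ⟨J₀, hMsub hJ₀⟩
  -- key lemma: no element of U is entailed by heads R ∪ T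
  have hkey : ∀ c ∈ U, ¬ K.entails (heads R ∪ T) c := by
    intro c hc hent
    obtain ⟨r, hrR, hdisj⟩ := hU.2 c hc R hRP hent hFcond hcons
    obtain ⟨hrP, ⟨hbp, hbn⟩, hUemp⟩ := hrR
    rcases hdisj with ⟨b, hbP, hbF⟩ | ⟨d, hdN, hdT⟩ | ⟨d, hd⟩
    · obtain ⟨J, hJ, hbJ⟩ := hsatF b hbF
      exact hbJ (hbp b hbP J hJ)
    · obtain ⟨J, hJ, hdJ⟩ := hbn d hdN
      exact hdJ (hsatT d hdT J hJ)
    · exact absurd hd (by simp [hUemp])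
  -- the models of OB_{O, heads R ∪ T} satisfy π(K) w.r.t. M
  have hstruct : K.structSat (K.OBmod (heads R ∪ T)) M := by
    constructor
    · exact fun J hJ => hJ.1
    · rintro r hrP ⟨hbp, hbn⟩ J hJ
      have hbpM : ∀ b ∈ r.bodyP, ∀ J' ∈ M, b ∈ J' :=
        fun b hb J' hJ' => hbp b hb J' (hMsub hJ')
      have hUemp : r.bodyP ∩ U = ∅ := by
        by_contra h
        obtain ⟨d, hdP, hdU⟩ := Set.nonempty_iff_ne_empty.2 h
        exact hkey d hdU (fun I hI => hbp d hdP I hI)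
      have hrR : r ∈ R := ⟨hrP, ⟨hbpM, hbn⟩, hUemp⟩
      exact hJ.2 (Or.inl ⟨r, hrR, rfl⟩)
  -- by minimality, the models of OB_{O, heads R ∪ T} are exactly M
  have hNM : K.OBmod (heads R ∪ T) = M := by
    by_contra h
    exact hmin _ (HasSubset.Subset.ssubset_of_ne hMsub (Ne.symm h)) hstruct
  -- conclude
  intro u hu
  by_contra h
  push_neg at h
  exact hkey u hu (fun I hI => h I (hNM ▸ hI))
end

section
/- Let K = (O, P) be a ground normal hybrid MKNF knowledge base and M an MKNF model of K. Define T = {K a ∈ KA(K) | M ⊨_MKNF K a} and F = KA(K) \ T. Then F is the greatest unfounded set of K with respect to (T, F). -/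
universe u

open MKB in
/-- if `M` is an MKNF model of `K`, `T = {K a ∈ KA(K) | M ⊨ K a}` and
`F = KA(K) \ T`, then `F` is the greatest unfounded set of `K` w.r.t. `(T, F)`. -/
theorem model_false_atoms_greatest_unfounded {α : Type u} (K : MKB α)
    (M : Set (Set α)) (hM : K.IsMKNFModel M)
    (T F : Set α)
    (hTdef : T = {a | a ∈ K.KA ∧ ∀ J ∈ M, a ∈ J})
    (hFdef : F = K.KA \ T) :
    K.Unfounded T F F ∧ ∀ X : Set α, K.Unfounded T F X → X ⊆ F := by
  obtain ⟨hne, hsat, hmax⟩ := hM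
  have hMsub : M ⊆ K.OBmod T := by
    intro J hJ
    refine ⟨hsat.1 J hJ, ?_⟩
    intro a ha
    rw [hTdef] at ha
    exact ha.2 J hJ
  have hMeq : M = K.OBmod T := by
    by_contra hneq
    have hss : M ⊂ K.OBmod T := ⟨hMsub, fun h => hneq (le_antisymm hMsub h)⟩
    refine hmax _ hss ?_
    constructor
    · intro J hJ; exact hJ.1
    · intro r hr hbody J hJ
      have hbM : MKB.bodySat M M r :=
        ⟨fun b hb J' hJ' => hbody.1 b hb J' (hMsub hJ'), hbody.2⟩
      have hhead : r.head ∈ T := by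
        rw [hTdef]
        exact ⟨⟨r, hr, Or.inl rfl⟩, hsat.2 r hr hbM⟩
      exact hJ.2 hhead
  -- key: if a ∈ KA and OB_{O,T} ⊨ a then a ∈ T
  have hentT : ∀ a ∈ K.KA, K.entails T a → a ∈ T := by
    intro a haKA hent
    rw [hTdef]
    refine ⟨haKA, fun J hJ => hent J ?_⟩
    rw [← hMeq]; exact hJ
  constructor
  · refine ⟨by rw [hFdef]; exact Set.diff_subset, ?_⟩
    intro a haF R hR hent _ _
    by_contra hno
    push_neg at hno
    have hheads : MKB.heads R ⊆ T := by
      rintro h ⟨r, hrR, hrh⟩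
      have hP1 : (r.bodyP ∩ F) = ∅ := (hno r hrR).1
      have hN1 : (r.bodyN ∩ T) = ∅ := (hno r hrR).2.1
      have hbM : MKB.bodySat M M r := by
        constructor
        · intro b hb J hJ
          have hbKA : b ∈ K.KA := ⟨r, hR hrR, Or.inr (Or.inl hb)⟩
          have hbT : b ∈ T := by
            by_contra hbT
            exact Set.eq_empty_iff_forall_notMem.mp hP1 b
              ⟨hb, by rw [hFdef]; exact ⟨hbKA, hbT⟩⟩
          rw [hTdef] at hbT
          exact hbT.2 J hJ
        · intro c hc
          have hcKA : c ∈ K.KA := ⟨r, hR hrR, Or.inr (Or.inr hc)⟩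
          have hcT : c ∉ T := fun h =>
            Set.eq_empty_iff_forall_notMem.mp hN1 c ⟨hc, h⟩
          by_contra hc2
          push_neg at hc2
          exact hcT (by rw [hTdef]; exact ⟨hcKA, hc2⟩)
      subst hrh
      rw [hTdef]
      exact ⟨⟨r, hR hrR, Or.inl rfl⟩, hsat.2 r (hR hrR) hbM⟩
    have hun : MKB.heads R ∪ T = T := Set.union_eq_self_of_subset_left hheads
    rw [hun] at hent
    have haKA : a ∈ K.KA := by rw [hFdef] at haF; exact haF.1
    have : a ∈ T := hentT a haKA hent
    rw [hFdef] at haF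
    exact haF.2 this
  · rintro X ⟨hXKA, hX⟩ a haX
    rw [hFdef]
    refine ⟨hXKA haX, fun haT => ?_⟩
    have hh : MKB.heads (∅ : Set (MRule α)) = ∅ := by
      ext x; simp [MKB.heads]
    have hOB : MKB.heads (∅ : Set (MRule α)) ∪ T = T := by rw [hh, Set.empty_union]
    have := hX a haX ∅ (Set.empty_subset _)
      (by rw [MKB.entails, hOB, ← hMeq]
          intro I hI
          rw [hTdef] at haT
          exact haT.2 I hI)
      (by intro b hb
          rw [hFdef] at hb
          have : ¬ ∀ J ∈ M, b ∈ J := by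
            intro h
            exact hb.2 (by rw [hTdef]; exact ⟨hb.1, h⟩)
          push_neg at this
          obtain ⟨J, hJ, hbJ⟩ := this
          exact ⟨J, by rw [hOB, ← hMeq]; exact hJ, hbJ⟩)
      (by intro _
          obtain ⟨J, hJ⟩ := hne
          exact ⟨J, by rw [hOB, ← hMeq]; exact hJ⟩)
    obtain ⟨r, hr, _⟩ := this
    exact Set.notMem_empty r hr
end

section
/- Let K = (O, P) be a ground normal hybrid MKNF knowledge base, (T, F) a partial partition of KA(K), and X, Y ⊆ KA(K). Then T_K^{(T,F)}(X, Y) is contained in the first component of UP_K^{(T,F)}(X, Y), i.e., every K-atom produced by the immediate-consequence component of the well-founded operator is also produced by unit propagation. -/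
universe u

open MKB in
/-- every K-atom produced by the immediate-consequence component
`T_K^{(T,F)}(X, Y)` of the well-founded operator is also produced by unit propagation,
i.e. `T_K^{(T,F)}(X, Y)` is contained in the first component of `UP_K^{(T,F)}(X, Y)`. -/
theorem TKop_subset_UPop_fst {α : Type u} (K : MKB α)
    (T F : Set α) (hT : T ⊆ K.KA) (hF : F ⊆ K.KA) (hTF : T ∩ F = ∅)
    (X Y : Set α) (hX : X ⊆ K.KA) (hY : Y ⊆ K.KA) :
    K.TKop T F X Y ⊆ (K.UPop T F (X, Y)).1 := by
  intro a ha
  unfold MKB.UPop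
  split
  · -- conflict: fst is KA, show a ∈ KA
    rcases ha with ⟨r, hr, hhead, _, _⟩ | ⟨haKA, _⟩
    · exact ⟨r, hr, Or.inl hhead.symm⟩
    · exact haKA
  · rcases ha with ⟨r, hr, hhead, hbp, hbn⟩ | ⟨haKA, hent⟩
    · refine Or.inr ?_
      refine MKB.Deriv.pos r a hr (Or.inl hhead.symm) ?_ ?_
      · intro b hb hne hbFY
        rcases hb with hb | hb
        · exact absurd (hb.trans hhead) hne
        · exact absurd (hbn hb) hbFY
      · intro c hc hcTX
        exact absurd (hbp hc) hcTX
    · exact Or.inr (MKB.Deriv.ent a haKA hent)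
end

section
/- Let K = (O, P) be a ground normal hybrid MKNF knowledge base and (T, F) a partial partition of KA(K). Then for all X, Y ⊆ KA(K), W_K^{(T,F)}(X, Y) ⊑ E_K^{(T,F)}(X, Y), and consequently W_K(T, F) ⊑ E_K(T, F) for the corresponding least fixpoints. -/
universe u

open MKB in
theorem WKop_le_EKop_all {α : Type u} (K : MKB α) (T F : Set α)
    (p : Set α × Set α) : K.WKop T F p ≤ K.EKop T F p := by
  classical
  have hTK : ∀ X Y : Set α, K.TKop T F X Y ⊆
      (K.UPop T F (X, Y)).1 := by
    intro X Y a ha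
    unfold MKB.UPop
    by_cases hc : UPconflict K T F X Y
    · simp only [hc, if_pos]
      rcases ha with ⟨r, hr, heq, _, _⟩ | ⟨haKA, _⟩
      · exact ⟨r, hr, Or.inl heq.symm⟩
      · exact haKA
    · simp only [hc, if_neg, not_false_iff]
      right
      rcases ha with ⟨r, hr, heq, hbp, hbn⟩ | ⟨haKA, hent⟩
      · refine Deriv.pos r a hr (Or.inl heq.symm) ?_ ?_
        · intro b hb hne hbF
          rcases hb with hb | hb
          · exact absurd (hb.trans heq) hne
          · exact absurd (hbn hb) hbF
        · intro c hc' hcn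
          exact absurd (hbp hc') hcn
      · exact Deriv.ent a haKA hent
  constructor
  · intro a ha
    have h := hTK p.1 p.2 ha
    show a ∈ (K.UPop T F p).1 ∪ (∅ : Set α)
    exact Or.inl h
  · -- second components
    show K.UK (T ∪ p.1) (F ∪ p.2) ⊆ (K.EKop T F p).2
    intro a ha
    have : (K.EKop T F p).2 = (K.UPop T F p).2 ∪ K.UK (T ∪ p.1) (F ∪ p.2) := rfl
    rw [this]
    exact Or.inr ha

open MKB in
/-- `W_K^{(T,F)}(X, Y) ⊑ E_K^{(T,F)}(X, Y)` for all `X, Y ⊆ KA(K)`, and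
consequently `W_K(T, F) ⊑ E_K(T, F)` for the corresponding least fixpoints. -/
theorem WKop_le_EKop_and_WKfix_le_EKfix {α : Type u} (K : MKB α)
    (T F : Set α) (hT : T ⊆ K.KA) (hF : F ⊆ K.KA) (hTF : T ∩ F = ∅) :
    (∀ X Y : Set α, X ⊆ K.KA → Y ⊆ K.KA →
      K.WKop T F (X, Y) ≤ K.EKop T F (X, Y)) ∧
    K.WKfix T F ≤ K.EKfix T F := by
  constructor
  · intro X Y _ _
    exact WKop_le_EKop_all K T F (X, Y)
  · apply sInf_le_sInf
    intro p hp
    exact le_trans (WKop_le_EKop_all K T F p) hp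
end

section
/- Let K = (O, P) be a ground normal hybrid MKNF knowledge base and (T, F) a partial partition of KA(K), and write W_K(T, F) = (T*_W, F*_W) and E_K(T, F) = (T*_E, F*_E). Then for any MKNF model M of K with M ⊨_MKNF ⋀_{K a ∈ T} K a ∧ ⋀_{K b ∈ F} ¬ K b, it holds that M ⊨_MKNF ⋀_{K a ∈ T*_W} K a ∧ ⋀_{K b ∈ F*_W} ¬ K b and M ⊨_MKNF ⋀_{K a ∈ T*_E} K a ∧ ⋀_{K b ∈ F*_E} ¬ K b. -/
universe u

open MKB in
/-- Auxiliary lemma: with `A` the set of atoms true in all of `M` and `B` the set of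
atoms false somewhere in `M`, the pair `(A, B)` is a prefixed point of both `WKop`
and `EKop`, hence bounds the least fixpoints. -/
theorem aux_prefixed {α : Type u} (K : MKB α) (T F : Set α) (M : Set (Set α))
    (hMne : M.Nonempty) (hmodel : K.structSat M M)
    (A B : Set α)
    (hAmem : ∀ x, x ∈ A ↔ ∀ J ∈ M, x ∈ J)
    (hBmem : ∀ x, x ∈ B ↔ ∃ J ∈ M, x ∉ J)
    (hTA : T ⊆ A) (hFB : F ⊆ B) :
    K.WKfix T F ≤ (A, B) ∧ K.EKfix T F ≤ (A, B) := by
  classical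
  have hnB : ∀ x, x ∉ B → x ∈ A := fun x hx =>
    (hAmem x).2 fun J hJ => by
      by_contra h
      exact hx ((hBmem x).2 ⟨J, hJ, h⟩)
  have hnA : ∀ x, x ∉ A → x ∈ B := fun x hx => by
    by_contra h
    exact hx (hnB x h)
  have hABdisj : ∀ x, x ∈ A → x ∈ B → False := fun x h1 h2 => by
    obtain ⟨J, hJ, hn⟩ := (hBmem x).1 h2
    exact hn ((hAmem x).1 h1 J hJ)
  have hTAu : T ∪ A = A := Set.union_eq_self_of_subset_left hTA
  have hFBu : F ∪ B = B := Set.union_eq_self_of_subset_left hFB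
  have hMO : ∀ J ∈ M, J ∈ K.O := hmodel.1
  have hhead : ∀ r ∈ K.P, r.bodyP ⊆ A → r.bodyN ⊆ B → r.head ∈ A := by
    intro r hr h1 h2
    exact (hAmem _).2 (hmodel.2 r hr
      ⟨fun b hb J hJ => (hAmem b).1 (h1 hb) J hJ, fun c hc => (hBmem c).1 (h2 hc)⟩)
  have hentTA : ∀ a, K.entails (T ∪ A) a → a ∈ A := by
    intro a h
    rw [hTAu] at h
    exact (hAmem a).2 fun J hJ => h J ⟨hMO J hJ, fun x hx => (hAmem x).1 hx J hJ⟩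
  -- the greatest unfounded set w.r.t. (A, B) is contained in B
  have hUK : K.UK A B ⊆ B := by
    intro a ha
    obtain ⟨X, hXu, haX⟩ := ha
    by_contra haB
    have haA : a ∈ A := hnB a haB
    set R0 : Set (MRule α) :=
      {r | r ∈ K.P ∧ r.bodyP ∩ B = ∅ ∧ r.bodyN ∩ A = ∅ ∧ r.bodyP ∩ X = ∅} with hR0
    have hR0P : R0 ⊆ K.P := fun r hr => hr.1
    have hheadsA : heads R0 ⊆ A := by
      rintro x ⟨r, hr, rfl⟩
      refine hhead r hr.1 (fun c hc => ?_) (fun c hc => ?_)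
      · by_contra h
        exact Set.eq_empty_iff_forall_notMem.mp hr.2.1 c ⟨hc, hnA c h⟩
      · by_contra h
        exact Set.eq_empty_iff_forall_notMem.mp hr.2.2.1 c ⟨hc, hnB c h⟩
    have hmemOB : ∀ J ∈ M, J ∈ K.OBmod (heads R0 ∪ A) := fun J hJ =>
      ⟨hMO J hJ, fun x hx =>
        (hAmem x).1 (hx.elim (fun h => hheadsA h) id) J hJ⟩
    obtain ⟨r, hrR0, hd⟩ := hXu.2 a haX R0 hR0P
      (fun I hI => hI.2 (Set.mem_union_right _ haA))
      (fun b hb => by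
        obtain ⟨J, hJ, hbJ⟩ := (hBmem b).1 hb
        exact ⟨J, hmemOB J hJ, hbJ⟩)
      (fun _ => by
        obtain ⟨J, hJ⟩ := hMne
        exact ⟨J, hmemOB J hJ⟩)
    rcases hd with ⟨x, hx⟩ | ⟨x, hx⟩ | ⟨x, hx⟩
    · exact Set.eq_empty_iff_forall_notMem.mp hrR0.2.1 x hx
    · exact Set.eq_empty_iff_forall_notMem.mp hrR0.2.2.1 x hx
    · exact Set.eq_empty_iff_forall_notMem.mp hrR0.2.2.2 x hx
  -- the T-operator stays inside A
  have hTK : K.TKop T F A B ⊆ A := by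
    intro a ha
    cases ha with
    | inl h =>
      obtain ⟨r, hr, hhd, hbP, hbN⟩ := h
      exact hhd ▸ hhead r hr
        (fun c hc => (hbP hc).elim (fun h => hTA h) id)
        (fun c hc => (hbN hc).elim (fun h => hFB h) id)
    | inr h => exact hentTA a h.2
  -- W part
  have hWle : K.WKfix T F ≤ (A, B) := by
    apply sInf_le
    show K.WKop T F (A, B) ≤ (A, B)
    refine Prod.mk_le_mk.mpr ⟨hTK, ?_⟩
    show K.UK (T ∪ A) (F ∪ B) ⊆ B
    rw [hTAu, hFBu]
    exact hUK
  -- soundness of unit propagation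
  have key : ∀ (s : Bool) (a : α), Deriv K T F A B s a → a ∈ cond s A B := by
    intro s a h
    induction h with
    | ent a haKA hent => exact hentTA a hent
    | pos r a hrP hmem hbN hbP ihN ihP =>
      have hP : r.bodyP ⊆ A := by
        intro c hc
        by_cases h : c ∈ T ∪ A
        · exact h.elim (fun h => hTA h) id
        · exact ihP c hc h
      have hNB : ∀ b, (b = r.head ∨ b ∈ r.bodyN) → b ≠ a → b ∈ B := by
        intro b hb hne
        by_cases h : b ∈ F ∪ B
        · exact h.elim (fun h => hFB h) id
        · exact ihN b hb hne h
      show a ∈ A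
      by_contra haA
      have haB : a ∈ B := hnA a haA
      have hN : r.bodyN ⊆ B := by
        intro c hc
        by_cases hca : c = a
        · exact hca ▸ haB
        · exact hNB c (Or.inr hc) hca
      have hh : r.head ∈ A := hhead r hrP hP hN
      cases hmem with
      | inl h => exact haA (h ▸ hh)
      | inr h =>
        by_cases hha : r.head = a
        · exact haA (hha ▸ hh)
        · exact hABdisj _ hh (hNB r.head (Or.inl rfl) hha)
    | neg r a hrP haP hbN hbP ihN ihP =>
      have hNB : ∀ b, (b = r.head ∨ b ∈ r.bodyN) → b ∈ B := by
        intro b hb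
        by_cases h : b ∈ F ∪ B
        · exact h.elim (fun h => hFB h) id
        · exact ihN b hb h
      show a ∈ B
      by_contra haB
      have haA : a ∈ A := hnB a haB
      have hP : r.bodyP ⊆ A := by
        intro c hc
        by_cases hca : c = a
        · exact hca ▸ haA
        · by_cases h : c ∈ T ∪ A
          · exact h.elim (fun h => hTA h) id
          · exact ihP c hc hca h
      have hh : r.head ∈ A := hhead r hrP hP (fun c hc => hNB c (Or.inr hc))
      exact hABdisj _ hh (hNB r.head (Or.inl rfl))
  -- no conflict arises
  have hnc : ¬ UPconflict K T F A B := by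
    rintro ⟨r, hrP, hN, hP⟩
    have hPA : r.bodyP ⊆ A := fun c hc =>
      (hP c hc).elim (fun h => h.elim (fun h => hTA h) id) (fun h => key true c h)
    have hNB : ∀ b, (b = r.head ∨ b ∈ r.bodyN) → b ∈ B := fun b hb =>
      (hN b hb).elim (fun h => h.elim (fun h => hFB h) id) (fun h => key false b h)
    exact hABdisj _ (hhead r hrP hPA (fun c hc => hNB c (Or.inr hc)))
      (hNB r.head (Or.inl rfl))
  -- E part
  have hUP : K.UPop T F (A, B) ≤ (A, B) := by
    unfold MKB.UPop
    rw [if_neg hnc]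
    refine Prod.mk_le_mk.mpr ⟨?_, ?_⟩
    · exact Set.union_subset subset_rfl (fun a ha => key true a ha)
    · exact Set.union_subset subset_rfl (fun a ha => key false a ha)
  have hEle : K.EKfix T F ≤ (A, B) := by
    apply sInf_le
    show K.EKop T F (A, B) ≤ (A, B)
    refine sup_le hUP (Prod.mk_le_mk.mpr ⟨Set.empty_subset A, ?_⟩)
    show K.UK (T ∪ A) (F ∪ B) ⊆ B
    rw [hTAu, hFBu]
    exact hUK
  exact ⟨hWle, hEle⟩

open MKB in
/-- writing `W_K(T, F) = (T*_W, F*_W)` and `E_K(T, F) = (T*_E, F*_E)`, any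
MKNF model `M` of `K` with `M ⊨ ⋀_{K a ∈ T} K a ∧ ⋀_{K b ∈ F} ¬ K b` also satisfies
`M ⊨ ⋀_{K a ∈ T*_W} K a ∧ ⋀_{K b ∈ F*_W} ¬ K b` and
`M ⊨ ⋀_{K a ∈ T*_E} K a ∧ ⋀_{K b ∈ F*_E} ¬ K b`. -/
theorem models_satisfy_WKfix_and_EKfix {α : Type u} (K : MKB α)
    (T F : Set α) (hT : T ⊆ K.KA) (hF : F ⊆ K.KA) (hTF : T ∩ F = ∅)
    (TW FW TE FE : Set α)
    (hW : K.WKfix T F = (TW, FW)) (hE : K.EKfix T F = (TE, FE))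
    (M : Set (Set α)) (hM : K.IsMKNFModel M)
    (hsatT : ∀ a ∈ T, ∀ J ∈ M, a ∈ J)
    (hsatF : ∀ b ∈ F, ∃ J ∈ M, b ∉ J) :
    ((∀ a ∈ TW, ∀ J ∈ M, a ∈ J) ∧ (∀ b ∈ FW, ∃ J ∈ M, b ∉ J)) ∧
    ((∀ a ∈ TE, ∀ J ∈ M, a ∈ J) ∧ (∀ b ∈ FE, ∃ J ∈ M, b ∉ J)) := by
  obtain ⟨hMne, hmodel, -⟩ := hM
  obtain ⟨h1, h2⟩ := aux_prefixed K T F M hMne hmodel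
    {a | ∀ J ∈ M, a ∈ J} {b | ∃ J ∈ M, b ∉ J}
    (fun _ => Iff.rfl) (fun _ => Iff.rfl) hsatT hsatF
  rw [hW] at h1
  rw [hE] at h2
  exact ⟨⟨fun a ha => h1.1 ha, fun b hb => h1.2 hb⟩,
         ⟨fun a ha => h2.1 ha, fun b hb => h2.2 hb⟩⟩
end

section
/- Let K = (O, P) be a ground normal hybrid MKNF knowledge base, (T_W, F_W) = W_K(∅, ∅) the well-founded partition of K, and (T_E, F_E) = E_K(∅, ∅) the expanding well-founded partition of K. If T_W ∩ F_W ≠ ∅ or T_E ∩ F_E ≠ ∅, then K does not have an MKNF model. -/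
universe u

open MKB in
/-- let `(T_W, F_W) = W_K(∅, ∅)` and `(T_E, F_E) = E_K(∅, ∅)`.  If
`T_W ∩ F_W ≠ ∅` or `T_E ∩ F_E ≠ ∅`, then `K` does not have an MKNF model. -/
theorem inconsistent_wf_partition_no_model {α : Type u} (K : MKB α)
    (TW FW TE FE : Set α)
    (hW : K.WKfix ∅ ∅ = (TW, FW)) (hE : K.EKfix ∅ ∅ = (TE, FE))
    (h : TW ∩ FW ≠ ∅ ∨ TE ∩ FE ≠ ∅) :
    ¬ ∃ M : Set (Set α), K.IsMKNFModel M := by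
  classical
  rintro ⟨M, hMne, ⟨hO, hrules⟩, _⟩
  set S : Set α := {a | a ∈ K.KA ∧ ∀ J ∈ M, a ∈ J} with hSdef
  set F' : Set α := K.KA \ S with hFdef
  have hSsub : ∀ J ∈ M, S ⊆ J := fun J hJ a ha => ha.2 J hJ
  have hMO : ∀ J ∈ M, J ∈ K.OBmod S := fun J hJ => ⟨hO J hJ, hSsub J hJ⟩
  have hent : ∀ a ∈ K.KA, K.entails S a → a ∈ S :=
    fun a ha he => ⟨ha, fun J hJ => he J (hMO J hJ)⟩
  have hFmem : ∀ b ∈ F', ∃ J ∈ M, b ∉ J := by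
    intro b hb
    by_contra hcon
    push_neg at hcon
    exact hb.2 ⟨hb.1, hcon⟩
  have hbody : ∀ r ∈ K.P, r.bodyP ⊆ S → (∀ c ∈ r.bodyN, c ∉ S) → r.head ∈ S := by
    intro r hr hP hN
    have hbs : bodySat M M r := by
      constructor
      · intro b hb J hJ; exact (hP hb).2 J hJ
      · intro c hc
        exact hFmem c ⟨⟨r, hr, Or.inr (Or.inr hc)⟩, hN c hc⟩
    exact ⟨⟨r, hr, Or.inl rfl⟩, fun J hJ => hrules r hr hbs J hJ⟩
  have hUK : K.UK S F' ⊆ F' := by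
    intro a ha
    obtain ⟨X, hX, haX⟩ := ha
    have haKA : a ∈ K.KA := hX.1 haX
    refine ⟨haKA, fun haS => ?_⟩
    set R : Set (MRule α) :=
      {r | r ∈ K.P ∧ r.bodyP ⊆ S ∧ (∀ c ∈ r.bodyN, c ∉ S) ∧ r.bodyP ∩ X = ∅} with hRdef
    have hheads : heads R ⊆ S := by
      rintro b ⟨r, ⟨hr, hP, hN, _⟩, rfl⟩
      exact hbody r hr hP hN
    have hHS : heads R ∪ S ⊆ S := Set.union_subset hheads (subset_refl S)
    have hobsub : ∀ J ∈ M, J ∈ K.OBmod (heads R ∪ S) :=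
      fun J hJ => ⟨hO J hJ, fun b hb => hSsub J hJ (hHS hb)⟩
    obtain ⟨r, hrR, hcase⟩ := hX.2 a haX R (fun r hrr => hrr.1)
      (fun I hI => hI.2 (Set.mem_union_right _ haS))
      (fun b hb => by
        obtain ⟨J, hJ, hbJ⟩ := hFmem b hb
        exact ⟨J, hobsub J hJ, hbJ⟩)
      (fun _ => by
        obtain ⟨J, hJ⟩ := hMne
        exact ⟨J, hobsub J hJ⟩)
    rcases hcase with ⟨b, hb1, hb2⟩ | ⟨b, hb1, hb2⟩ | ⟨b, hb1, hb2⟩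
    · exact hb2.2 (hrR.2.1 hb1)
    · exact hrR.2.2.1 b hb1 hb2
    · exact absurd (Set.mem_inter hb1 hb2)
        (by rw [hrR.2.2.2]; exact Set.notMem_empty b)
  have hDeriv : ∀ (b : Bool) (a : α), Deriv K ∅ ∅ S F' b a → a ∈ (cond b S F') := by
    intro b a hd
    induction hd with
    | ent a ha he =>
        simp only [Set.empty_union] at he
        exact hent a ha he
    | pos r a hr hma hb hc ihb ihc =>
        simp only [Set.empty_union] at ihb ihc
        show a ∈ S
        by_contra haS
        have haKA : a ∈ K.KA := by
          rcases hma with h1 | h1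
          · exact ⟨r, hr, Or.inl h1⟩
          · exact ⟨r, hr, Or.inr (Or.inr h1)⟩
        have haF : a ∈ F' := ⟨haKA, haS⟩
        have hbF : ∀ b, (b = r.head ∨ b ∈ r.bodyN) → b ∈ F' := by
          intro b hbh
          by_cases hba : b = a
          · exact hba ▸ haF
          · by_cases hbF' : b ∈ F'
            · exact hbF'
            · exact ihb b hbh hba hbF'
        have hPS : r.bodyP ⊆ S := by
          intro c hcp
          by_cases hcS : c ∈ S
          · exact hcS
          · exact ihc c hcp hcS
        exact (hbF r.head (Or.inl rfl)).2
          (hbody r hr hPS fun c hcn => (hbF c (Or.inr hcn)).2)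
    | neg r a hr hma hb hc ihb ihc =>
        simp only [Set.empty_union] at ihb ihc
        show a ∈ F'
        have haKA : a ∈ K.KA := ⟨r, hr, Or.inr (Or.inl hma)⟩
        refine ⟨haKA, fun haS => ?_⟩
        have hbF : ∀ b, (b = r.head ∨ b ∈ r.bodyN) → b ∈ F' := by
          intro b hbh
          by_cases hbF' : b ∈ F'
          · exact hbF'
          · exact ihb b hbh hbF'
        have hPS : r.bodyP ⊆ S := by
          intro c hcp
          by_cases hca : c = a
          · exact hca ▸ haS
          · by_cases hcS : c ∈ S
            · exact hcS
            · exact ihc c hcp hca hcS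
        exact (hbF r.head (Or.inl rfl)).2
          (hbody r hr hPS fun c hcn => (hbF c (Or.inr hcn)).2)
  have hNoConf : ¬ UPconflict K ∅ ∅ S F' := by
    rintro ⟨r, hr, hb, hc⟩
    have hbF : ∀ b, (b = r.head ∨ b ∈ r.bodyN) → b ∈ F' := by
      intro b hbh
      rcases hb b hbh with h1 | h1
      · simpa using h1
      · exact hDeriv false b h1
    have hPS : r.bodyP ⊆ S := by
      intro c hcp
      rcases hc c hcp with h1 | h1
      · simpa using h1
      · exact hDeriv true c h1
    exact (hbF r.head (Or.inl rfl)).2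
      (hbody r hr hPS fun c hcn => (hbF c (Or.inr hcn)).2)
  have hSF : S ∩ F' = ∅ := by
    ext a
    simp only [Set.mem_inter_iff, Set.mem_empty_iff_false, iff_false, not_and]
    exact fun h1 h2 => h2.2 h1
  have hUK' : K.UK (∅ ∪ S) (∅ ∪ F') ⊆ F' := by
    simpa using hUK
  have hWpre : K.WKop ∅ ∅ (S, F') ≤ (S, F') := by
    constructor
    · show K.TKop ∅ ∅ S F' ⊆ S
      intro a ha
      rcases ha with ⟨r, hr, rfl, hP, hN⟩ | ⟨ha, he⟩
      · simp only [Set.empty_union] at hP hN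
        exact hbody r hr hP fun c hc => ((hN hc).2 : c ∉ S)
      · simp only [Set.empty_union] at he
        exact hent _ ha he
    · exact hUK'
  have hUP : K.UPop ∅ ∅ (S, F') =
      (S ∪ {a | Deriv K ∅ ∅ S F' true a}, F' ∪ {a | Deriv K ∅ ∅ S F' false a}) := by
    rw [MKB.UPop]
    exact if_neg hNoConf
  have hEpre : K.EKop ∅ ∅ (S, F') ≤ (S, F') := by
    show K.UPop ∅ ∅ (S, F') ⊔ (∅, K.UK (∅ ∪ S) (∅ ∪ F')) ≤ (S, F')
    refine sup_le ?_ ⟨Set.empty_subset S, hUK'⟩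
    rw [hUP]
    exact ⟨Set.union_subset (subset_refl S) fun a ha => hDeriv true a ha,
      Set.union_subset (subset_refl F') fun a ha => hDeriv false a ha⟩
  have hWle : K.WKfix ∅ ∅ ≤ (S, F') := sInf_le hWpre
  have hEle : K.EKfix ∅ ∅ ≤ (S, F') := sInf_le hEpre
  rw [hW] at hWle
  rw [hE] at hEle
  rcases h with h | h
  · exact h (Set.subset_empty_iff.mp (hSF ▸ Set.inter_subset_inter hWle.1 hWle.2))
  · exact h (Set.subset_empty_iff.mp (hSF ▸ Set.inter_subset_inter hEle.1 hEle.2))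
end
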